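/- The system of equations over ℚ given by p41 = p10^3·p12, p43 = p10^2·p12^2, p45 = p10·p12^3, p119 = p41·p43·p10^2·p12^3, p119 = p10^12, p119 = p12^10, and p119 = p2^60 has exactly five solutions (p2, p10, p12, p41, p43, p45, p119) ∈ ℚ^7, namely (0,0,0,0,0,0,0), (1,1,1,1,1,1,1), (1,1,−1,−1,1,−1,1), (−1,1,1,1,1,1,1), and (−1,1,−1,−1,1,−1,1). -/
import Mathlib

private lemma v0 (a b c d e f g : ℚ) : ![a,b,c,d,e,f,g] 0 = a := rfl
private lemma v1 (a b c d e f g : ℚ) : ![a,b,c,d,e,f,g] 1 = b := rfl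
private lemma v2 (a b c d e f g : ℚ) : ![a,b,c,d,e,f,g] 2 = c := rfl
private lemma v3 (a b c d e f g : ℚ) : ![a,b,c,d,e,f,g] 3 = d := rfl
private lemma v4 (a b c d e f g : ℚ) : ![a,b,c,d,e,f,g] 4 = e := rfl
private lemma v5 (a b c d e f g : ℚ) : ![a,b,c,d,e,f,g] 5 = f := rfl
private lemma v6 (a b c d e f g : ℚ) : ![a,b,c,d,e,f,g] 6 = g := rfl

/-- Example 3.2: coordinates `p 0 = p2`, `p 1 = p10`, `p 2 = p12`, `p 3 = p41`,
`p 4 = p43`, `p 5 = p45`, `p 6 = p119`. The coherence system has exactly the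
five listed solutions. -/
theorem stmt_3 :
    {p : Fin 7 → ℚ | p 3 = p 1 ^ 3 * p 2 ∧
       p 4 = p 1 ^ 2 * p 2 ^ 2 ∧
       p 5 = p 1 * p 2 ^ 3 ∧
       p 6 = p 3 * p 4 * p 1 ^ 2 * p 2 ^ 3 ∧
       p 6 = p 1 ^ 12 ∧
       p 6 = p 2 ^ 10 ∧
       p 6 = p 0 ^ 60} =
      {![0, 0, 0, 0, 0, 0, 0], ![1, 1, 1, 1, 1, 1, 1], ![1, 1, -1, -1, 1, -1, 1],
        ![-1, 1, 1, 1, 1, 1, 1], ![-1, 1, -1, -1, 1, -1, 1]} ∧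
    ({![0, 0, 0, 0, 0, 0, 0], ![1, 1, 1, 1, 1, 1, 1], ![1, 1, -1, -1, 1, -1, 1],
        ![-1, 1, 1, 1, 1, 1, 1], ![-1, 1, -1, -1, 1, -1, 1]} :
      Set (Fin 7 → ℚ)).ncard = 5 := by
  constructor
  · ext p
    simp only [Set.mem_setOf_eq, Set.mem_insert_iff, Set.mem_singleton_iff]
    constructor
    · rintro ⟨h3, h4, h5, h6a, h6b, h6c, h6d⟩
      have hp : p = ![p 0, p 1, p 2, p 3, p 4, p 5, p 6] := by
        funext i; fin_cases i <;> rfl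
      by_cases ha : p 1 = 0
      · have h6 : p 6 = 0 := by rw [h6b, ha]; ring
        have hb : p 2 = 0 := by
          have := h6c; rw [h6] at this
          exact pow_eq_zero_iff (by norm_num) |>.mp this.symm
        have hc : p 0 = 0 := by
          have := h6d; rw [h6] at this
          exact pow_eq_zero_iff (by norm_num) |>.mp this.symm
        left
        rw [hp, ha, hb, hc, h6, h3, h4, h5, ha, hb]
        norm_num
      · -- p 6 = p1^7 * p2^8
        have key : p 1 ^ 12 = p 1 ^ 7 * p 2 ^ 6 := by
          rw [← h6b, h6a, h3, h4]; ring
        have hb : p 2 ≠ 0 := by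
          intro hb
          apply ha
          have : p 1 ^ 12 = 0 := by rw [← h6b, h6c, hb]; ring
          exact pow_eq_zero_iff (by norm_num) |>.mp this
        have h58 : p 1 ^ 5 = p 2 ^ 6 := by
          have h7 : p 1 ^ 7 ≠ 0 := pow_ne_zero _ ha
          have : p 1 ^ 7 * p 1 ^ 5 = p 1 ^ 7 * p 2 ^ 6 := by linear_combination key
          exact mul_left_cancel₀ h7 this
        have h23 : p 1 ^ 11 = 1 := by
          have e1 : p 1 ^ 25 = p 2 ^ 30 := by
            calc p 1 ^ 25 = (p 1 ^ 5) ^ 5 := by ring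
            _ = (p 2 ^ 6) ^ 5 := by rw [h58]
            _ = p 2 ^ 30 := by ring
          have e2 : p 2 ^ 30 = p 1 ^ 36 := by
            calc p 2 ^ 30 = (p 2 ^ 10) ^ 3 := by ring
            _ = (p 1 ^ 12) ^ 3 := by rw [← h6b, h6c]
            _ = p 1 ^ 36 := by ring
          have e3 : p 1 ^ 25 * 1 = p 1 ^ 25 * p 1 ^ 11 := by
            calc p 1 ^ 25 * 1 = p 1 ^ 25 := mul_one _
            _ = p 2 ^ 30 := e1
            _ = p 1 ^ 36 := e2
            _ = p 1 ^ 25 * p 1 ^ 11 := by ring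
          exact (mul_left_cancel₀ (pow_ne_zero 25 ha) e3).symm
        have ha1 : p 1 = 1 := by
          rcases (pow_eq_one_iff_of_ne_zero (by norm_num)).mp h23 with h | ⟨_, he⟩
          · exact h
          · exact absurd he (by decide)
        have h6 : p 6 = 1 := by rw [h6b, ha1]; ring
        have hb1 : p 2 = 1 ∨ p 2 = -1 := by
          have : p 2 ^ 10 = 1 := by rw [← h6c, h6]
          rcases (pow_eq_one_iff_of_ne_zero (by norm_num)).mp this with h | ⟨h, _⟩
          · exact Or.inl h
          · exact Or.inr h
        have hc1 : p 0 = 1 ∨ p 0 = -1 := by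
          have : p 0 ^ 60 = 1 := by rw [← h6d, h6]
          rcases (pow_eq_one_iff_of_ne_zero (by norm_num)).mp this with h | ⟨h, _⟩
          · exact Or.inl h
          · exact Or.inr h
        rcases hc1 with hc | hc <;> rcases hb1 with hbv | hbv
        · right; left
          rw [hp, hc, ha1, hbv, h6, h3, h4, h5, ha1, hbv]; norm_num
        · right; right; left
          rw [hp, hc, ha1, hbv, h6, h3, h4, h5, ha1, hbv]; norm_num
        · right; right; right; left
          rw [hp, hc, ha1, hbv, h6, h3, h4, h5, ha1, hbv]; norm_num
        · right; right; right; right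
          rw [hp, hc, ha1, hbv, h6, h3, h4, h5, ha1, hbv]; norm_num
    · rintro (rfl | rfl | rfl | rfl | rfl) <;> simp only [v0, v1, v2, v3, v4, v5, v6] <;> norm_num
  · rw [Set.ncard_insert_of_notMem, Set.ncard_insert_of_notMem,
      Set.ncard_insert_of_notMem, Set.ncard_insert_of_notMem,
      Set.ncard_singleton] <;>
    simp [funext_iff, Fin.forall_fin_succ, Matrix.cons_val_zero, Matrix.cons_val_succ] <;> norm_num
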